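/- There exists an integer d₀ such that for every integer d ≥ d₀ with both d and (d−1)/2 odd, the graph of the polytope Ξ has edge expansion strictly less than d/(√2)^d. -/

import Mathlib

open Set Pointwise

noncomputable section

/-- The graph of a polytope `P`: vertices are the extreme points of `P`, and two distinct
extreme points are adjacent exactly when the closed segment between them is an extreme
subset (a face) of `P`. -/
def polyGraph {d : ℕ} (P : Set (Fin d → ℝ)) :
    SimpleGraph {x : Fin d → ℝ // x ∈ Set.extremePoints ℝ P} where
  Adj u v := u ≠ v ∧ IsExtreme ℝ P (segment ℝ u.1 v.1)
  symm := by
    constructor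
    rintro u v ⟨h1, h2⟩
    refine ⟨h1.symm, ?_⟩
    rwa [segment_symm]
  loopless := by constructor; rintro u ⟨h1, _⟩; exact h1 rfl

/-- The set `∂S` of edges of a graph with exactly one endpoint in `S`. -/
def edgeCut {V : Type*} (G : SimpleGraph V) (S : Set V) : Set (Sym2 V) :=
  {e | e ∈ G.edgeSet ∧ ∃ u v, u ∈ S ∧ v ∉ S ∧ e = s(u, v)}

variable (d : ℕ)

/-- The vertices of the hypercube `[0,1]^d`. -/
def cubeVerts : Set (Fin d → ℝ) := {x | ∀ i, x i = 0 ∨ x i = 1}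

/-- The set `𝒞` of centers of the `(d-1)/2`-dimensional faces of `[0,1]^d`: points with
exactly `(d-1)/2` coordinates equal to `1/2` and all remaining coordinates in `{0,1}`. -/
def centerSet : Set (Fin d → ℝ) :=
  {x | (∀ i, x i = 0 ∨ x i = 1/2 ∨ x i = 1) ∧ {i | x i = 1/2}.ncard = (d - 1) / 2}

/-- The slab `L` bounded by the hyperplanes `H_{(d-1)/2}` and `H_{(d+1)/2}`. -/
def slabL : Set (Fin d → ℝ) :=
  {x | ((d : ℝ) - 1) / 2 ≤ ∑ i, x i ∧ ∑ i, x i ≤ ((d : ℝ) + 1) / 2}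

/-- The set `𝒱 = (𝒞 ∖ L) ∪ ({0,1}^d ∩ L)`. -/
def vSet : Set (Fin d → ℝ) := (centerSet d \ slabL d) ∪ (cubeVerts d ∩ slabL d)

/-- The polytope `Ξ`, the convex hull of `𝒱`. -/
def Xi : Set (Fin d → ℝ) := convexHull ℝ (vSet d)


/-!
Write `d = 2h + 1` and `h + 1 = 2m`, and cut the vertices of `Ξ` by the hyperplane `H_{d/2}`.

`Ξ` contains the whole section `[0,1]^d ∩ H_{d/2}`: by Krein–Milman it suffices to check the
extreme points of the section, which have a single fractional coordinate `1/2` and are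
midpoints of two cube vertices of `𝒱`. Hence an edge `[u, v]` of `Ξ` crossing `H_{d/2}` meets it
in a point with at most two fractional coordinates (two independent directions inside the
section would stay inside the edge). This rules out centers as endpoints and forces `u`, `v` to
be cube vertices of weights `h` and `h + 1` that differ in one coordinate, so at most
`C(d, h) (h + 1)` edges cross.

Every center outside `L` is exposed by a linear functional, so it is a vertex of `Ξ`. Centers
with half-set `H` of size `h` and ones-set `K ⊆ Hᶜ` with `|K| < m` (resp. `|K| > m`) lie below
(resp. above) `H_{d/2}`, and there are `C(d, h) (4^m - C(2m, m)) / 2` of each kind. As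
`5 C(2m, m) ≤ 4^m` for `m ≥ 8`, the ratio `2 (h + 1) / (4^m - C(2m, m))` is below `d / √2^d`.
-/

variable {d}

section Convexity

variable {E : Type*} [AddCommGroup E] [Module ℝ E]

theorem mem_extremePoints_convexHull_of_lt {s : Set E} {c : E} (f : E →ₗ[ℝ] ℝ) (hc : c ∈ s)
    (hf : ∀ p ∈ s, p ≠ c → f p < f c) : c ∈ (convexHull ℝ s).extremePoints ℝ := by
  set P := {x | f x < f c ∨ x = c}
  have hP : Convex ℝ P := by
    refine convex_iff_forall_pos.2 fun x hx y hy a b ha hb hab => ?_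
    have hfc : f c = a * f c + b * f c := by rw [← add_mul, hab, one_mul]
    rcases hx with hx | rfl <;> rcases hy with hy | rfl
    · left; simp only [map_add, map_smul, smul_eq_mul]
      nlinarith [mul_lt_mul_of_pos_left hx ha, mul_lt_mul_of_pos_left hy hb]
    · left; simp only [map_add, map_smul, smul_eq_mul]
      nlinarith [mul_lt_mul_of_pos_left hx ha]
    · left; simp only [map_add, map_smul, smul_eq_mul]
      nlinarith [mul_lt_mul_of_pos_left hy hb]
    · right; rw [← add_smul, hab, one_smul]
  have hsP : convexHull ℝ s ⊆ P :=
    convexHull_min (fun p hp => (eq_or_ne p c).elim Or.inr fun h => Or.inl (hf p hp h)) hP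
  have hPc : P \ {c} = {x | f x < f c} := by
    ext x
    simp only [P, mem_sdiff, mem_ofPred_eq, mem_singleton_iff]
    exact ⟨fun ⟨h, h'⟩ => h.resolve_right h', fun h => ⟨Or.inl h, by rintro rfl; simp at h⟩⟩
  have hcP : c ∈ P.extremePoints ℝ :=
    hP.mem_extremePoints_iff_convex_sdiff.2 ⟨Or.inr rfl, hPc ▸ convex_halfSpace_lt f.isLinear _⟩
  exact inter_extremePoints_subset_extremePoints_of_subset hsP ⟨subset_convexHull ℝ s hc, hcP⟩

theorem IsExtreme.exists_eq_smul_sub {K : Set E} {u v z a : E}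
    (hF : IsExtreme ℝ K (segment ℝ u v)) (hz : z ∈ segment ℝ u v) (hp : z + a ∈ K)
    (hm : z - a ∈ K) : ∃ t : ℝ, a = t • (v - u) := by
  have hmid : z ∈ openSegment ℝ (z - a) (z + a) :=
    ⟨1 / 2, 1 / 2, by norm_num, by norm_num, by norm_num, by module⟩
  have ha : z + a ∈ segment ℝ u v := hF.right_mem_of_mem_openSegment hm hp hz hmid
  rw [segment_eq_image'] at hz ha
  obtain ⟨s, -, rfl⟩ := hz
  obtain ⟨t, -, ht⟩ := ha
  exact ⟨t - s, by rw [sub_smul]; linear_combination (norm := module) -ht⟩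

theorem exists_mem_openSegment_apply_eq {u v : E} (f : E →ₗ[ℝ] ℝ) {r : ℝ} (hu : f u < r)
    (hv : r < f v) : ∃ z ∈ openSegment ℝ u v, f z = r := by
  set θ := (r - f u) / (f v - f u)
  have hθ : θ * (f v - f u) = r - f u := div_mul_cancel₀ _ (by linarith)
  have hθ0 : 0 < θ := div_pos (by linarith) (by linarith)
  have hθ1 : θ < 1 := (div_lt_one (by linarith)).2 (by linarith)
  refine ⟨(1 - θ) • u + θ • v, ⟨1 - θ, θ, by linarith, hθ0, by ring, rfl⟩, ?_⟩
  simp only [map_add, map_smul, smul_eq_mul]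
  linear_combination hθ

end Convexity

theorem mem_Ioo_of_mem_openSegment {a b c : ℝ} (ha : a ∈ Icc 0 1) (hb : b ∈ Icc 0 1)
    (hc : c ∈ openSegment ℝ a b) (hab : a ≠ b ∨ a ∈ Ioo 0 1) : c ∈ Ioo 0 1 := by
  rcases eq_or_ne a b with rfl | hne
  · rw [openSegment_same, mem_singleton_iff] at hc
    exact hc ▸ hab.resolve_left (not_not.2 rfl)
  · rw [openSegment_eq_Ioo' hne] at hc
    exact ⟨(le_min ha.1 hb.1).trans_lt hc.1, hc.2.trans_le (max_le ha.2 hb.2)⟩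

section Counting

theorem centralBinom_succ_le (n : ℕ) : (n + 1).centralBinom ≤ 4 * n.centralBinom := by
  refine Nat.le_of_mul_le_mul_left (c := n + 1) ?_ n.succ_pos
  rw [Nat.succ_mul_centralBinom_succ]
  nlinarith

theorem centralBinom_mul_four_pow_le {m n : ℕ} (hmn : m ≤ n) :
    n.centralBinom * 4 ^ m ≤ m.centralBinom * 4 ^ n := by
  induction n, hmn using Nat.le_induction with
  | base => rfl
  | succ n _ ih =>
    calc (n + 1).centralBinom * 4 ^ m ≤ 4 * n.centralBinom * 4 ^ m :=
          Nat.mul_le_mul_right _ (centralBinom_succ_le n)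
      _ ≤ 4 * (m.centralBinom * 4 ^ n) := by rw [mul_assoc]; exact Nat.mul_le_mul_left _ ih
      _ = m.centralBinom * 4 ^ (n + 1) := by ring

theorem five_mul_centralBinom_le {m : ℕ} (hm : 8 ≤ m) : 5 * m.centralBinom ≤ 4 ^ m := by
  have h := centralBinom_mul_four_pow_le hm
  rw [show Nat.centralBinom 8 = 12870 by decide] at h
  omega

variable {α : Type*} [DecidableEq α] {T : Finset α} {m : ℕ}

theorem card_filter_lt_card_eq (hT : T.card = 2 * m) :
    (T.powerset.filter fun K => m < K.card).card =
      (T.powerset.filter fun K => K.card < m).card := by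
  refine Finset.card_bij' (fun K _ => T \ K) (fun K _ => T \ K) ?_ ?_ ?_ ?_ <;>
    simp only [Finset.mem_filter, Finset.mem_powerset]
  · rintro K ⟨hKT, hK⟩
    have := Finset.card_le_card hKT
    exact ⟨Finset.sdiff_subset, by rw [Finset.card_sdiff_of_subset hKT]; omega⟩
  · rintro K ⟨hKT, hK⟩
    exact ⟨Finset.sdiff_subset, by rw [Finset.card_sdiff_of_subset hKT]; omega⟩
  · rintro K ⟨hKT, -⟩; exact Finset.sdiff_sdiff_eq_self hKT
  · rintro K ⟨hKT, -⟩; exact Finset.sdiff_sdiff_eq_self hKT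

theorem two_mul_card_filter_card_lt_add_centralBinom (hT : T.card = 2 * m) :
    2 * (T.powerset.filter fun K => K.card < m).card + m.centralBinom = 4 ^ m := by
  have hmid : (T.powerset.filter fun K => K.card = m).card = m.centralBinom := by
    rw [← Finset.powersetCard_eq_filter, Finset.card_powersetCard, hT,
      Nat.centralBinom_eq_two_mul_choose]
  have htot : (T.powerset.filter fun K => K.card < m).card +
      (T.powerset.filter fun K => K.card = m).card +
      (T.powerset.filter fun K => m < K.card).card = 4 ^ m := by
    rw [show 4 ^ m = T.powerset.card by rw [Finset.card_powerset, hT, pow_mul]; norm_num,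
      Finset.card_filter, Finset.card_filter, Finset.card_filter, ← Finset.sum_add_distrib,
      ← Finset.sum_add_distrib, Finset.card_eq_sum_ones]
    exact Finset.sum_congr rfl fun K _ => by split_ifs <;> omega
  rw [card_filter_lt_card_eq hT, hmid] at htot
  omega

theorem two_mul_card_filter_lt_card_add_centralBinom (hT : T.card = 2 * m) :
    2 * (T.powerset.filter fun K => m < K.card).card + m.centralBinom = 4 ^ m := by
  rw [card_filter_lt_card_eq hT]
  exact two_mul_card_filter_card_lt_add_centralBinom hT

theorem exists_notMem_eq_insert {A B : Finset α} {n : ℕ} (hA : A.card = n) (hB : B.card = n + 1)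
    (hAB : (A \ B).card + (B \ A).card ≤ 2) : ∃ i ∉ A, B = insert i A := by
  have h₁ := Finset.card_sdiff_add_card_inter A B
  have h₂ := Finset.card_sdiff_add_card_inter B A
  rw [Finset.inter_comm] at h₂
  have hsub : A ⊆ B := Finset.sdiff_eq_empty_iff_subset.1 (Finset.card_eq_zero.1 (by omega))
  obtain ⟨i, hi⟩ := Finset.card_eq_one.1 (by omega : (B \ A).card = 1)
  refine ⟨i, (Finset.mem_sdiff.1 (hi ▸ Finset.mem_singleton_self i)).2, ?_⟩
  rw [← Finset.union_sdiff_of_subset hsub, hi, Finset.union_singleton]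

end Counting

section CubeSection

theorem mem_Icc_zero_one_iff {x : Fin d → ℝ} : x ∈ Icc 0 1 ↔ ∀ i, x i ∈ Icc 0 1 := by
  simp [← pi_univ_Icc]

def cubeSection (d : ℕ) (r : ℝ) : Set (Fin d → ℝ) := Icc 0 1 ∩ {x | ∑ i, x i = r}

def cubeVertex (A : Finset (Fin d)) : Fin d → ℝ := fun i => if i ∈ A then 1 else 0

theorem sum_cubeVertex (A : Finset (Fin d)) : ∑ i, cubeVertex A i = A.card := by
  simp [cubeVertex]

theorem eq_cubeVertex_of_mem_cubeVerts {x : Fin d → ℝ} (hx : x ∈ cubeVerts d) :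
    x = cubeVertex (Finset.univ.filter fun i => x i = 1) := by
  funext i
  rcases hx i with h | h <;> simp [cubeVertex, h]

variable {r : ℝ}

theorem isCompact_cubeSection : IsCompact (cubeSection d r) :=
  isCompact_Icc.inter_right (isClosed_eq (by fun_prop) continuous_const)

theorem convex_cubeSection : Convex ℝ (cubeSection d r) := by
  refine (convex_Icc 0 1).inter fun x hx y hy a b _ _ hab => ?_
  simp only [mem_ofPred_eq, Pi.add_apply, Pi.smul_apply, smul_eq_mul, Finset.sum_add_distrib,
    ← Finset.mul_sum] at hx hy ⊢
  rw [hx, hy, ← add_mul, hab, one_mul]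

theorem add_smul_single_sub_single_mem_cubeSection {x : Fin d → ℝ} (hx : x ∈ cubeSection d r)
    {i j : Fin d} (hij : i ≠ j) {t : ℝ} (hi : x i + t ∈ Icc 0 1) (hj : x j - t ∈ Icc 0 1) :
    x + t • (Pi.single i 1 - Pi.single j 1) ∈ cubeSection d r := by
  refine ⟨mem_Icc_zero_one_iff.2 fun k => ?_, ?_⟩
  · rcases eq_or_ne k i with rfl | hki
    · simpa [hij] using hi
    rcases eq_or_ne k j with rfl | hkj
    · simpa [hki, sub_eq_add_neg] using hj
    · simpa [hki, hkj] using mem_Icc_zero_one_iff.1 hx.1 k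
  · simpa [Finset.sum_add_distrib, ← Finset.mul_sum, Finset.sum_sub_distrib] using hx.2

theorem exists_pos_add_sub_mem_cubeSection {x : Fin d → ℝ} (hx : x ∈ cubeSection d r)
    {i j : Fin d} (hij : i ≠ j) (hi : x i ∈ Ioo 0 1) (hj : x j ∈ Ioo 0 1) :
    ∃ t : ℝ, 0 < t ∧ x + t • (Pi.single i 1 - Pi.single j 1) ∈ cubeSection d r ∧
      x - t • (Pi.single i 1 - Pi.single j 1) ∈ cubeSection d r := by
  obtain ⟨hi₀, hi₁⟩ := hi
  obtain ⟨hj₀, hj₁⟩ := hj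
  set t := min (min (x i) (1 - x i)) (min (x j) (1 - x j))
  have ht : 0 < t := lt_min (lt_min hi₀ (by linarith)) (lt_min hj₀ (by linarith))
  have hti : t ≤ x i ∧ t ≤ 1 - x i :=
    ⟨(min_le_left _ _).trans (min_le_left _ _), (min_le_left _ _).trans (min_le_right _ _)⟩
  have htj : t ≤ x j ∧ t ≤ 1 - x j :=
    ⟨(min_le_right _ _).trans (min_le_left _ _), (min_le_right _ _).trans (min_le_right _ _)⟩
  refine ⟨t, ht, add_smul_single_sub_single_mem_cubeSection hx hij ?_ ?_, ?_⟩
  · constructor <;> linarith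
  · constructor <;> linarith
  · rw [sub_eq_add_neg, ← neg_smul]
    refine add_smul_single_sub_single_mem_cubeSection hx hij ?_ ?_ <;> constructor <;> linarith

theorem eq_of_mem_extremePoints_cubeSection {x : Fin d → ℝ}
    (hx : x ∈ (cubeSection d r).extremePoints ℝ) {i j : Fin d} (hi : x i ∈ Ioo 0 1)
    (hj : x j ∈ Ioo 0 1) : i = j := by
  by_contra hij
  obtain ⟨t, ht, hp, hm⟩ := exists_pos_add_sub_mem_cubeSection hx.1 hij hi hj
  have hmid : x ∈ openSegment ℝ (x + t • (Pi.single i 1 - Pi.single j 1))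
      (x - t • (Pi.single i 1 - Pi.single j 1)) :=
    ⟨1 / 2, 1 / 2, by norm_num, by norm_num, by norm_num, by module⟩
  have := congrFun (hx.2 hp hm hmid) i
  simp [hij] at this
  linarith

theorem eq_cubeVertex_add_of_mem_extremePoints_cubeSection {x : Fin d → ℝ}
    (hx : x ∈ (cubeSection d r).extremePoints ℝ) {i : Fin d} (hi : x i ∈ Ioo 0 1) :
    x = cubeVertex (Finset.univ.filter fun k => x k = 1) + x i • Pi.single i 1 := by
  funext k
  rcases eq_or_ne k i with rfl | hk
  · simp [cubeVertex, hi.2.ne]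
  · have hk01 : x k ∈ Icc 0 1 \ Ioo 0 1 :=
      ⟨mem_Icc_zero_one_iff.1 hx.1.1 k, fun hk' => hk (eq_of_mem_extremePoints_cubeSection hx hk' hi)⟩
    rw [Icc_sdiff_Ioo_same zero_le_one] at hk01
    rcases hk01 with h | h <;> simp_all [cubeVertex]

theorem card_filter_mem_Ioo_le_two {K : Set (Fin d → ℝ)} (hK : cubeSection d r ⊆ K)
    {u v z : Fin d → ℝ} (hF : IsExtreme ℝ K (segment ℝ u v)) (hz : z ∈ segment ℝ u v)
    (hzr : z ∈ cubeSection d r) :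
    (Finset.univ.filter fun k => z k ∈ Ioo 0 1).card ≤ 2 := by
  by_contra! h3
  obtain ⟨i, hi, j, hj, l, hl, hij, hil, hjl⟩ := Finset.two_lt_card.1 h3
  simp only [Finset.mem_filter, Finset.mem_univ, true_and] at hi hj hl
  obtain ⟨t, ht, hp, hm⟩ := exists_pos_add_sub_mem_cubeSection hzr hij hi hj
  obtain ⟨s, hs, gp, gm⟩ := exists_pos_add_sub_mem_cubeSection hzr hil hi hl
  obtain ⟨a, ha⟩ := hF.exists_eq_smul_sub hz (hK hp) (hK hm)
  obtain ⟨b, hb⟩ := hF.exists_eq_smul_sub hz (hK gp) (hK gm)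
  have hai := congrFun ha i
  have hal := congrFun ha l
  have hbl := congrFun hb l
  simp [hij, hjl.symm, hil.symm] at hai hal hbl
  rcases hal with rfl | hvu
  · simp at hai; linarith
  · rw [hvu, mul_zero] at hbl; linarith

end CubeSection

section Xi

variable {h : ℕ}

theorem vSet_coord {x : Fin d → ℝ} (hx : x ∈ vSet d) (i : Fin d) :
    x i = 0 ∨ x i = 1 / 2 ∨ x i = 1 := by
  rcases hx with ⟨⟨hx, -⟩, -⟩ | ⟨hx, -⟩
  · exact hx i
  · rcases hx i with h | h <;> simp [h]

theorem vSet_subset_Icc : vSet d ⊆ Icc 0 1 := fun x hx =>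
  mem_Icc_zero_one_iff.2 fun i => by rcases vSet_coord hx i with h | h | h <;> norm_num [h]

theorem vSet_finite : (vSet d).Finite :=
  (Set.Finite.pi (t := fun _ => {0, 1 / 2, 1}) fun _ => toFinite _).subset fun x hx =>
    mem_univ_pi.2 fun i => by simpa using vSet_coord hx i

theorem card_filter_eq_half {x : Fin d → ℝ} (hx : x ∈ centerSet d) :
    (Finset.univ.filter fun k => x k = 1 / 2).card = (d - 1) / 2 := by
  rw [← hx.2, ← Set.ncard_coe_finset, Finset.coe_filter]
  simp

theorem Xi_subset_Icc : Xi d ⊆ Icc 0 1 := convexHull_min vSet_subset_Icc (convex_Icc 0 1)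

instance : Finite ((Xi d).extremePoints ℝ) :=
  (vSet_finite.subset extremePoints_convexHull_subset).to_subtype

theorem natCast_ne_div_two (hd : d = 2 * h + 1) (n : ℕ) : (n : ℝ) ≠ d / 2 := by
  intro hn
  have : ((2 * n : ℕ) : ℝ) = ((2 * h + 1 : ℕ) : ℝ) := by push_cast [← hd]; linarith
  exact absurd (Nat.cast_injective this) (by omega)

theorem sum_ne_div_two_of_mem_vSet (hd : d = 2 * h + 1) {x : Fin d → ℝ} (hx : x ∈ vSet d) :
    ∑ i, x i ≠ d / 2 := by
  rcases hx with ⟨-, hL⟩ | ⟨hx, -⟩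
  · intro hs
    exact hL ⟨by rw [hs]; linarith, by rw [hs]; linarith⟩
  · rw [eq_cubeVertex_of_mem_cubeVerts hx, sum_cubeVertex]
    exact natCast_ne_div_two hd _

theorem cubeVertex_mem_vSet (hd : d = 2 * h + 1) {A : Finset (Fin d)}
    (hA : A.card = h ∨ A.card = h + 1) : cubeVertex A ∈ vSet d := by
  refine Or.inr ⟨fun i => by unfold cubeVertex; split_ifs <;> simp, ?_⟩
  simp only [slabL, mem_ofPred_eq, sum_cubeVertex, hd]
  rcases hA with hA | hA <;> rw [hA] <;> push_cast <;> constructor <;> linarith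

theorem card_eq_of_cubeVertex_mem_slabL (hd : d = 2 * h + 1) {A : Finset (Fin d)}
    (hA : cubeVertex A ∈ slabL d) : A.card = h ∨ A.card = h + 1 := by
  have hdR : (d : ℝ) = 2 * h + 1 := by exact_mod_cast hd
  obtain ⟨h₁, h₂⟩ := hA
  rw [sum_cubeVertex, hdR] at h₁ h₂
  have : h ≤ A.card := by exact_mod_cast (by linarith : (h : ℝ) ≤ A.card)
  have : A.card ≤ h + 1 := by exact_mod_cast (by linarith : (A.card : ℝ) ≤ h + 1)
  omega

theorem mem_Xi_of_mem_extremePoints_cubeSection (hd : d = 2 * h + 1) {x : Fin d → ℝ}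
    (hx : x ∈ (cubeSection d (d / 2)).extremePoints ℝ) : x ∈ Xi d := by
  obtain ⟨i, hi⟩ : ∃ i, x i ∈ Ioo 0 1 := by
    by_contra! hno
    have hcube : x ∈ cubeVerts d := fun k => by
      have hk : x k ∈ Icc 0 1 \ Ioo 0 1 := ⟨mem_Icc_zero_one_iff.1 hx.1.1 k, hno k⟩
      rw [Icc_sdiff_Ioo_same zero_le_one] at hk
      simpa using hk
    have hsum := hx.1.2
    rw [mem_ofPred_eq, eq_cubeVertex_of_mem_cubeVerts hcube, sum_cubeVertex] at hsum
    exact natCast_ne_div_two hd _ hsum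
  set A := Finset.univ.filter fun k => x k = 1
  have hxA : x = cubeVertex A + x i • Pi.single i 1 :=
    eq_cubeVertex_add_of_mem_extremePoints_cubeSection hx hi
  have hiA : i ∉ A := by simp [A, hi.2.ne]
  have hsum : (A.card : ℝ) + x i = h + 1 / 2 := by
    have := hx.1.2
    rw [mem_ofPred_eq, hxA] at this
    simpa [Finset.sum_add_distrib, sum_cubeVertex, Pi.single_apply, hd, add_div] using this
  obtain ⟨hi₀, hi₁⟩ := hi
  have hAh : A.card = h := by
    have : A.card < h + 1 := by exact_mod_cast (by linarith : (A.card : ℝ) < h + 1)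
    have : h < A.card + 1 := by exact_mod_cast (by linarith : (h : ℝ) < A.card + 1)
    omega
  have hmid : x = (1 / 2 : ℝ) • cubeVertex A + (1 / 2 : ℝ) • cubeVertex (insert i A) := by
    rw [hxA, show x i = 1 / 2 by rw [hAh] at hsum; linarith]
    funext k
    rcases eq_or_ne k i with rfl | hk
    · simp [cubeVertex, hiA]
    · simp [cubeVertex, hk]; split_ifs <;> norm_num
  rw [hmid]
  exact convex_convexHull ℝ _ (subset_convexHull ℝ _ (cubeVertex_mem_vSet hd (Or.inl hAh)))
    (subset_convexHull ℝ _ (cubeVertex_mem_vSet hd (Or.inr (by simp [hiA, hAh]))))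
    (by norm_num) (by norm_num) (by norm_num)

theorem cubeSection_div_two_subset_Xi (hd : d = 2 * h + 1) : cubeSection d (d / 2) ⊆ Xi d := by
  rw [← closure_convexHull_extremePoints isCompact_cubeSection convex_cubeSection]
  exact closure_minimal (convexHull_min (fun x hx => mem_Xi_of_mem_extremePoints_cubeSection hd hx)
    (convex_convexHull ℝ _)) (vSet_finite.isCompact_convexHull ℝ).isClosed

end Xi

section CrossingEdges

variable {h : ℕ} {u v z : Fin d → ℝ}

theorem card_le_two_of_forall_mem_Ioo (hd : d = 2 * h + 1) (hu : u ∈ vSet d) (hv : v ∈ vSet d)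
    (hF : IsExtreme ℝ (Xi d) (segment ℝ u v)) (hz : z ∈ segment ℝ u v) (hzs : ∑ k, z k = d / 2)
    {T : Finset (Fin d)} (hT : ∀ k ∈ T, z k ∈ Ioo 0 1) : T.card ≤ 2 := by
  have hzX : z ∈ Xi d :=
    (convex_convexHull ℝ _).segment_subset (subset_convexHull ℝ _ hu) (subset_convexHull ℝ _ hv) hz
  exact (Finset.card_le_card fun k hk => Finset.mem_filter.2 ⟨Finset.mem_univ _, hT k hk⟩).trans <|
    card_filter_mem_Ioo_le_two (cubeSection_div_two_subset_Xi hd) hF hz ⟨Xi_subset_Icc hzX, hzs⟩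

theorem mem_cubeVerts_of_mem_openSegment (hd : d = 2 * h + 1) (hh : 3 ≤ h) (hu : u ∈ vSet d)
    (hv : v ∈ vSet d) (hz : z ∈ openSegment ℝ u v)
    (hfrac : ∀ T : Finset (Fin d), (∀ k ∈ T, z k ∈ Ioo 0 1) → T.card ≤ 2) :
    u ∈ cubeVerts d ∩ slabL d := by
  refine hu.resolve_left fun hc => absurd (hfrac _ fun k hk => ?_)
    (by rw [card_filter_eq_half hc.1, hd]; omega)
  rw [Finset.mem_filter] at hk
  refine mem_Ioo_of_mem_openSegment (mem_Icc_zero_one_iff.1 (vSet_subset_Icc hu) k)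
    (mem_Icc_zero_one_iff.1 (vSet_subset_Icc hv) k) (Pi.openSegment_subset u v hz k (mem_univ k))
    (Or.inr ?_)
  rw [hk.2]
  norm_num

theorem exists_cubeVertex_of_isExtreme_segment (hd : d = 2 * h + 1) (hh : 3 ≤ h)
    (hu : u ∈ vSet d) (hv : v ∈ vSet d) (hus : ∑ i, u i < d / 2) (hvs : d / 2 < ∑ i, v i)
    (hF : IsExtreme ℝ (Xi d) (segment ℝ u v)) :
    ∃ A i, A.card = h ∧ i ∉ A ∧ u = cubeVertex A ∧ v = cubeVertex (insert i A) := by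
  obtain ⟨z, hz, hzs⟩ := exists_mem_openSegment_apply_eq (dotProductBilin ℝ ℝ 1)
    (by simpa [dotProduct] using hus) (by simpa [dotProduct] using hvs)
  have hfrac := fun T => card_le_two_of_forall_mem_Ioo (T := T) hd hu hv hF
    (openSegment_subset_segment ℝ u v hz) (by simpa [dotProduct] using hzs)
  obtain ⟨huc, huL⟩ := mem_cubeVerts_of_mem_openSegment hd hh hu hv hz hfrac
  obtain ⟨hvc, hvL⟩ := mem_cubeVerts_of_mem_openSegment hd hh hv hu
    (openSegment_symm ℝ u v ▸ hz) hfrac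
  set A := Finset.univ.filter fun k => u k = 1
  set B := Finset.univ.filter fun k => v k = 1
  have hAu : u = cubeVertex A := eq_cubeVertex_of_mem_cubeVerts huc
  have hBv : v = cubeVertex B := eq_cubeVertex_of_mem_cubeVerts hvc
  have hdR : (d : ℝ) = 2 * h + 1 := by exact_mod_cast hd
  rw [hAu, sum_cubeVertex, hdR] at hus
  rw [hBv, sum_cubeVertex, hdR] at hvs
  have hA : A.card = h := (card_eq_of_cubeVertex_mem_slabL hd (hAu ▸ huL)).resolve_right
    fun hA => by rw [hA] at hus; push_cast at hus; linarith
  have hB : B.card = h + 1 := (card_eq_of_cubeVertex_mem_slabL hd (hBv ▸ hvL)).resolve_left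
    fun hB => by rw [hB] at hvs; linarith
  have hdiff : (A \ B).card + (B \ A).card ≤ 2 := by
    rw [← Finset.card_union_of_disjoint disjoint_sdiff_sdiff]
    refine hfrac _ fun k hk => mem_Ioo_of_mem_openSegment
      (mem_Icc_zero_one_iff.1 (vSet_subset_Icc hu) k) (mem_Icc_zero_one_iff.1 (vSet_subset_Icc hv) k)
      (Pi.openSegment_subset u v hz k (mem_univ k)) (Or.inl ?_)
    rcases Finset.mem_union.1 hk with hk | hk <;> simp only [A, B, Finset.mem_sdiff,
      Finset.mem_filter, Finset.mem_univ, true_and] at hk <;> grind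
  obtain ⟨i, hiA, hBA⟩ := exists_notMem_eq_insert hA hB hdiff
  exact ⟨A, i, hA, hiA, hAu, hBA ▸ hBv⟩

end CrossingEdges

section Centers

def centerWeight (σ a : ℝ) : ℝ := if a = 1 / 2 then σ else 2 * a - 1

theorem mul_sub_le_centerWeight_mul {σ a b : ℝ} (hσ : |σ| ≤ 1) (ha : a = 0 ∨ a = 1 / 2 ∨ a = 1)
    (hb : b ∈ Icc 0 1) : σ * (a - b) ≤ centerWeight σ a * (a - b) := by
  obtain ⟨hb0, hb1⟩ := hb
  rw [abs_le] at hσ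
  rcases ha with rfl | rfl | rfl <;> simp [centerWeight] <;> nlinarith

theorem le_centerWeight_mul {σ a b : ℝ} (hσ : |σ| ≤ 1 / 2) (ha : a = 0 ∨ a = 1 / 2 ∨ a = 1)
    (hb : b = 0 ∨ b = 1 / 2 ∨ b = 1) :
    3 / 8 * ((if b = 1 / 2 then 1 else 0) - (if a = 1 / 2 then 1 else 0)) +
      1 / 8 * (if a = b then 0 else 1) ≤ centerWeight σ a * (a - b) := by
  rw [abs_le] at hσ
  rcases ha with rfl | rfl | rfl <;> rcases hb with rfl | rfl | rfl <;> norm_num [centerWeight] <;>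
    linarith

variable {c p : Fin d → ℝ} {σ : ℝ}

theorem sum_centerWeight_mul_sub_pos (hσ : |σ| ≤ 1 / 2) (hc : c ∈ centerSet d)
    (hp : p ∈ centerSet d) (hpc : p ≠ c) : 0 < ∑ k, centerWeight σ (c k) * (c k - p k) := by
  obtain ⟨k, hk⟩ := Function.ne_iff.1 hpc
  -- `c` and `p` have equally many coordinates `1/2`, so the first summand adds up to zero
  calc (0 : ℝ) < ∑ k, (3 / 8 * ((if p k = 1 / 2 then 1 else 0) - (if c k = 1 / 2 then 1 else 0))
        + 1 / 8 * (if c k = p k then 0 else 1)) := by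
        rw [Finset.sum_add_distrib, ← Finset.mul_sum, ← Finset.mul_sum, Finset.sum_sub_distrib,
          Finset.sum_boole, Finset.sum_boole, card_filter_eq_half hp, card_filter_eq_half hc,
          sub_self, mul_zero, zero_add]
        exact mul_pos (by norm_num) (Finset.sum_pos' (fun k _ => by split_ifs <;> norm_num)
          ⟨k, Finset.mem_univ _, by simp [Ne.symm hk]⟩)
    _ ≤ _ := Finset.sum_le_sum fun k _ => le_centerWeight_mul hσ (hc.1 k) (hp.1 k)

theorem mul_sum_sub_le_sum_centerWeight_mul (hσ : |σ| ≤ 1) (hc : c ∈ centerSet d)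
    (hp : p ∈ Icc 0 1) :
    σ * (∑ k, c k - ∑ k, p k) ≤ ∑ k, centerWeight σ (c k) * (c k - p k) := by
  rw [← Finset.sum_sub_distrib, Finset.mul_sum]
  exact Finset.sum_le_sum fun k _ =>
    mul_sub_le_centerWeight_mul hσ (hc.1 k) (mem_Icc_zero_one_iff.1 hp k)

theorem centerSet_sdiff_slabL_subset_extremePoints :
    centerSet d \ slabL d ⊆ (Xi d).extremePoints ℝ := by
  rintro c ⟨hc, hcL⟩
  have hout : ∑ k, c k < ((d : ℝ) - 1) / 2 ∨ ((d : ℝ) + 1) / 2 < ∑ k, c k := by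
    simp only [slabL, mem_ofPred_eq, not_and_or, not_le] at hcL
    exact hcL
  set σ : ℝ := if ∑ k, c k < ((d : ℝ) - 1) / 2 then -(1 / 2) else 1 / 2 with hσdef
  have hσ : |σ| = 1 / 2 := by rw [hσdef]; split_ifs <;> norm_num
  set F := dotProductBilin ℝ ℝ fun k => centerWeight σ (c k)
  have hF : ∀ x, F x = ∑ k, centerWeight σ (c k) * x k := fun x => by simp [F, dotProduct]
  refine mem_extremePoints_convexHull_of_lt F (Or.inl ⟨hc, hcL⟩) fun p hp hpc => ?_
  rw [hF, hF, ← sub_pos, ← Finset.sum_sub_distrib]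
  simp_rw [← mul_sub]
  rcases hp with ⟨hp, -⟩ | ⟨hpV, hpL⟩
  · exact sum_centerWeight_mul_sub_pos hσ.le hc hp hpc
  · refine lt_of_lt_of_le ?_ (mul_sum_sub_le_sum_centerWeight_mul (by rw [hσ]; norm_num) hc
      (vSet_subset_Icc (Or.inr ⟨hpV, hpL⟩)))
    obtain ⟨hpL₁, hpL₂⟩ := hpL
    split_ifs at hσdef with hlow
    · rw [hσdef]; nlinarith
    · rw [hσdef]; nlinarith [hout.resolve_left hlow]

end Centers

section FaceCenters

def faceCenter (H K : Finset (Fin d)) : Fin d → ℝ :=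
  fun i => if i ∈ H then 1 / 2 else if i ∈ K then 1 else 0

variable {H K : Finset (Fin d)}

theorem faceCenter_eq_half_iff {i : Fin d} : faceCenter H K i = 1 / 2 ↔ i ∈ H := by
  unfold faceCenter; split_ifs <;> norm_num [*]

theorem faceCenter_eq_one_iff (hHK : Disjoint H K) {i : Fin d} :
    faceCenter H K i = 1 ↔ i ∈ K := by
  unfold faceCenter
  split_ifs with hH hK <;> norm_num [*]
  exact Finset.disjoint_left.1 hHK hH

theorem sum_faceCenter (hHK : Disjoint H K) : ∑ i, faceCenter H K i = K.card + H.card / 2 := by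
  have : ∀ i, faceCenter H K i = 1 / 2 * cubeVertex H i + cubeVertex K i := fun i => by
    by_cases hi : i ∈ H
    · simp [faceCenter, cubeVertex, hi, Finset.disjoint_left.1 hHK hi]
    · simp [faceCenter, cubeVertex, hi]
  simp only [this, Finset.sum_add_distrib, ← Finset.mul_sum, sum_cubeVertex]
  ring

theorem faceCenter_mem_centerSet (hH : H.card = (d - 1) / 2) : faceCenter H K ∈ centerSet d := by
  refine ⟨fun i => ?_, ?_⟩
  · unfold faceCenter; split_ifs <;> simp
  · rw [← hH, ← Set.ncard_coe_finset]
    congr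
    ext i
    exact faceCenter_eq_half_iff

theorem faceCenter_injOn :
    {q : (_ : Finset (Fin d)) × Finset (Fin d) | Disjoint q.1 q.2}.InjOn
      fun q => faceCenter q.1 q.2 := by
  rintro ⟨H, K⟩ hHK ⟨H', K'⟩ hHK' heq
  simp only at heq
  obtain rfl : H = H' := Finset.ext fun i => by
    rw [← faceCenter_eq_half_iff (K := K), ← faceCenter_eq_half_iff (K := K'), heq]
  obtain rfl : K = K' := Finset.ext fun i => by
    rw [← faceCenter_eq_one_iff hHK, ← faceCenter_eq_one_iff hHK', heq]
  rfl

variable {h : ℕ}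

theorem faceCenter_mem_extremePoints (hd : d = 2 * h + 1) (hH : H.card = h)
    (hHK : Disjoint H K) (hK : 2 * K.card < h ∨ h + 2 < 2 * K.card) :
    faceCenter H K ∈ (Xi d).extremePoints ℝ := by
  refine centerSet_sdiff_slabL_subset_extremePoints ⟨faceCenter_mem_centerSet (by omega), ?_⟩
  have hdR : (d : ℝ) = 2 * h + 1 := by exact_mod_cast hd
  simp only [slabL, mem_ofPred_eq, sum_faceCenter hHK, hH, hdR, not_and_or, not_le]
  rcases hK with hK | hK
  · have : (2 * K.card : ℝ) < h := by exact_mod_cast hK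
    left; linarith
  · have : (h + 2 : ℝ) < 2 * K.card := by exact_mod_cast hK
    right; linarith

theorem sum_faceCenter_lt_div_two_iff (hd : d = 2 * h + 1) (hH : H.card = h)
    (hHK : Disjoint H K) : ∑ i, faceCenter H K i < d / 2 ↔ 2 * K.card < h + 1 := by
  have hdR : (d : ℝ) = 2 * h + 1 := by exact_mod_cast hd
  rw [sum_faceCenter hHK, hH, hdR, ← Nat.cast_lt (α := ℝ)]
  push_cast
  constructor <;> intro <;> linarith

end FaceCenters

section Expansion

variable {h : ℕ}

def lowerHalf (d : ℕ) : Set {x : Fin d → ℝ // x ∈ Set.extremePoints ℝ (Xi d)} :=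
  {v | ∑ i, v.1 i < d / 2}

def faceCenterFamily (d h : ℕ) (P : ℕ → Prop) [DecidablePred P] :
    Finset ((_ : Finset (Fin d)) × Finset (Fin d)) :=
  (Finset.univ.powersetCard h).sigma fun H => Hᶜ.powerset.filter fun K => P K.card

variable {P : ℕ → Prop} [DecidablePred P]

theorem mem_faceCenterFamily {q : (_ : Finset (Fin d)) × Finset (Fin d)} :
    q ∈ faceCenterFamily d h P ↔ q.1.card = h ∧ Disjoint q.1 q.2 ∧ P q.2.card := by
  simp [faceCenterFamily, Finset.subset_compl_iff_disjoint_left]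

theorem two_mul_card_faceCenterFamily {c q : ℕ}
    (hP : ∀ T : Finset (Fin d), T.card = d - h →
      2 * (T.powerset.filter fun K => P K.card).card + c = q) :
    2 * (faceCenterFamily d h P).card + d.choose h * c = d.choose h * q := by
  have hN : (Finset.univ.powersetCard h : Finset (Finset (Fin d))).card = d.choose h := by simp
  rw [faceCenterFamily, Finset.card_sigma]
  calc _ = ∑ H ∈ Finset.univ.powersetCard h,
        (2 * (Hᶜ.powerset.filter fun K => P K.card).card + c) := by
        rw [Finset.sum_add_distrib, Finset.sum_const, hN, smul_eq_mul, Finset.mul_sum]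
    _ = ∑ H ∈ Finset.univ.powersetCard h, q := Finset.sum_congr rfl fun H hH => hP _ <| by
        rw [Finset.card_compl, (Finset.mem_powersetCard.1 hH).2, Fintype.card_fin]
    _ = _ := by rw [Finset.sum_const, hN, smul_eq_mul]

theorem card_faceCenterFamily_le_ncard {W : Set {x : Fin d → ℝ // x ∈ (Xi d).extremePoints ℝ}}
    (hW : ∀ q ∈ faceCenterFamily d h P, ∃ w ∈ W, w.1 = faceCenter q.1 q.2) :
    (faceCenterFamily d h P).card ≤ W.ncard := by
  rw [← Set.ncard_coe_finset, ← (faceCenter_injOn.mono fun q hq =>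
    (mem_faceCenterFamily.1 hq).2.1).ncard_image,
    ← Set.ncard_image_of_injective W Subtype.val_injective]
  refine Set.ncard_le_ncard ?_ (toFinite _)
  rintro _ ⟨q, hq, rfl⟩
  obtain ⟨w, hw, hwq⟩ := hW q hq
  exact ⟨w, hw, hwq⟩

theorem card_faceCenterFamily_lt_le_ncard (hd : d = 2 * h + 1) {m : ℕ} (hm : h + 1 = 2 * m) :
    (faceCenterFamily d h (· < m)).card ≤ (lowerHalf d).ncard := by
  refine card_faceCenterFamily_le_ncard fun ⟨H, K⟩ hq => ?_
  obtain ⟨hH, hHK, hK⟩ := mem_faceCenterFamily.1 hq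
  exact ⟨⟨_, faceCenter_mem_extremePoints hd hH hHK (by omega)⟩,
    (sum_faceCenter_lt_div_two_iff hd hH hHK).2 (by omega), rfl⟩

theorem card_faceCenterFamily_gt_le_ncard (hd : d = 2 * h + 1) {m : ℕ} (hm : h + 1 = 2 * m) :
    (faceCenterFamily d h (m < ·)).card ≤ (lowerHalf d)ᶜ.ncard := by
  refine card_faceCenterFamily_le_ncard fun ⟨H, K⟩ hq => ?_
  obtain ⟨hH, hHK, hK⟩ := mem_faceCenterFamily.1 hq
  exact ⟨⟨_, faceCenter_mem_extremePoints hd hH hHK (by omega)⟩,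
    fun hlt => absurd ((sum_faceCenter_lt_div_two_iff hd hH hHK).1 hlt) (by omega), rfl⟩

theorem ncard_edgeCut_lowerHalf_le (hd : d = 2 * h + 1) (hh : 3 ≤ h) :
    (edgeCut (polyGraph (Xi d)) (lowerHalf d)).ncard ≤ d.choose h * (h + 1) := by
  set Γ := (Finset.univ.powersetCard h).sigma fun A : Finset (Fin d) => Aᶜ
  have hΓ : Γ.card = d.choose h * (h + 1) := by
    rw [Finset.card_sigma, Finset.sum_const_nat fun A hA => by
      rw [Finset.card_compl, (Finset.mem_powersetCard.1 hA).2, Fintype.card_fin]]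
    rw [Finset.card_powersetCard, Finset.card_univ, Fintype.card_fin]
    congr 1
    omega
  rw [← Set.ncard_image_of_injective _ (Sym2.map.injective Subtype.val_injective), ← hΓ,
    ← Set.ncard_coe_finset]
  refine (Set.ncard_le_ncard (t := (fun q : (_ : Finset (Fin d)) × Fin d =>
    s(cubeVertex q.1, cubeVertex (insert q.2 q.1))) '' Γ) ?_ (toFinite _)).trans
    (Set.ncard_image_le (toFinite _))
  rintro _ ⟨_, ⟨hadj, u, v, hu, hv, rfl⟩, rfl⟩
  have hvs : d / 2 < ∑ i, v.1 i := (not_lt.1 hv).lt_of_ne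
    (sum_ne_div_two_of_mem_vSet hd (extremePoints_convexHull_subset v.2)).symm
  obtain ⟨A, i, hA, hiA, hu', hv'⟩ := exists_cubeVertex_of_isExtreme_segment hd hh
    (extremePoints_convexHull_subset u.2) (extremePoints_convexHull_subset v.2) hu hvs hadj.2
  exact ⟨⟨A, i⟩, by simp [Γ, hA, hiA], by simp [hu', hv']⟩

theorem pos_of_two_mul_add_centralBinom {m N Y : ℕ} (hm : m ≠ 0) (hN : 0 < N)
    (hY : 2 * Y + N * m.centralBinom = N * 4 ^ m) : 0 < Y := by
  have := Nat.mul_lt_mul_of_pos_left (Nat.centralBinom_lt_four_pow hm) hN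
  omega

theorem div_min_lt_div_sqrt_two_pow {m N Y cut a b : ℕ} (hd : d = 2 * h + 1)
    (hm : h + 1 = 2 * m) (hm8 : 8 ≤ m) (hN : 0 < N)
    (hY : 2 * Y + N * m.centralBinom = N * 4 ^ m) (hcut : cut ≤ N * (h + 1)) (ha : Y ≤ a)
    (hb : Y ≤ b) : (cut : ℝ) / (min a b : ℕ) < d / √2 ^ d := by
  have hY0 : (0 : ℝ) < Y := by exact_mod_cast pos_of_two_mul_add_centralBinom (by omega) hN hY
  have hNR : (0 : ℝ) < N := by exact_mod_cast hN
  have hmin : (Y : ℝ) ≤ (min a b : ℕ) := by exact_mod_cast le_min ha hb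
  have hYR : 2 * (Y : ℝ) + N * m.centralBinom = N * 4 ^ m := by exact_mod_cast hY
  have hcb : 5 * (m.centralBinom : ℝ) ≤ 4 ^ m := by exact_mod_cast five_mul_centralBinom_le hm8
  have h4 : (4 : ℝ) ^ m = 2 * 2 ^ h := by
    rw [show (4 : ℝ) = 2 ^ 2 by norm_num, ← pow_mul, ← hm, pow_succ, mul_comm]
  have hsqrt : √2 ^ d = 2 ^ h * √2 := by
    rw [hd, pow_succ, pow_mul, Real.sq_sqrt (by norm_num)]
  have hs : √2 < 3 / 2 := by rw [Real.sqrt_lt' (by norm_num)]; norm_num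
  have hh : (7 : ℝ) ≤ h := by exact_mod_cast (by omega : 7 ≤ h)
  have hdR : (d : ℝ) = 2 * h + 1 := by exact_mod_cast hd
  have hP : (0 : ℝ) < 2 ^ h := by positivity
  calc (cut : ℝ) / (min a b : ℕ) ≤ N * (h + 1) / Y :=
        div_le_div₀ (by positivity) (by exact_mod_cast hcut) hY0 hmin
    _ < d / √2 ^ d := by
      rw [div_lt_div_iff₀ hY0 (by positivity), hsqrt, hdR]
      have e1 : N * (h + 1) * (2 ^ h * √2) < N * (h + 1) * (2 ^ h * (3 / 2)) :=
        mul_lt_mul_of_pos_left (mul_lt_mul_of_pos_left hs hP) (by positivity)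
      have e2 : (2 * h + 1) * (N * (m.centralBinom : ℝ)) ≤ (2 * h + 1) * (N * (2 / 5 * 2 ^ h)) :=
        mul_le_mul_of_nonneg_left (mul_le_mul_of_nonneg_left (by linarith) hNR.le) (by positivity)
      have e3 := congrArg ((2 * (h : ℝ) + 1) * ·) hYR
      rw [h4] at e3
      have e4 := mul_nonneg (mul_pos hNR hP).le (sub_nonneg.2 hh)
      linarith

end Expansion

/-- There exists `d₀` such that for every `d ≥ d₀` with both `d` and `(d-1)/2` odd,
the graph of `Ξ` has edge expansion strictly less than `d/(√2)^d`. -/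
theorem expansion_Xi_lt :
    ∃ d₀ : ℕ, ∀ d : ℕ, d₀ ≤ d → Odd d → Odd ((d - 1) / 2) →
      ∃ S : Set {x : Fin d → ℝ // x ∈ Set.extremePoints ℝ (Xi d)},
        S.Nonempty ∧ Sᶜ.Nonempty ∧
        ((edgeCut (polyGraph (Xi d)) S).ncard : ℝ) /
            (min S.ncard (Sᶜ).ncard : ℕ) <
          d / Real.sqrt 2 ^ d := by
  refine ⟨31, fun d hd₀ ⟨h, hd⟩ ⟨k, hk⟩ => ?_⟩
  have hm : h + 1 = 2 * (k + 1) := by omega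
  have hN : 0 < d.choose h := Nat.choose_pos (by omega)
  have hlow := two_mul_card_faceCenterFamily (d := d) (h := h) (P := (· < k + 1)) fun T hT =>
    two_mul_card_filter_card_lt_add_centralBinom (by omega : T.card = 2 * (k + 1))
  have hhigh := two_mul_card_faceCenterFamily (d := d) (h := h) (P := (k + 1 < ·)) fun T hT =>
    two_mul_card_filter_lt_card_add_centralBinom (by omega : T.card = 2 * (k + 1))
  have hY := pos_of_two_mul_add_centralBinom (by omega) hN hlow
  have hS := card_faceCenterFamily_lt_le_ncard hd hm
  have hSc := card_faceCenterFamily_gt_le_ncard hd hm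
  refine ⟨lowerHalf d, Set.nonempty_of_ncard_ne_zero (by omega),
    Set.nonempty_of_ncard_ne_zero (by omega), ?_⟩
  exact div_min_lt_div_sqrt_two_pow hd hm (by omega) hN hlow
    (ncard_edgeCut_lowerHalf_le hd (by omega)) hS (by omega)
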